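/- For all integers n, m ≥ 3, f(n+1, m+1) ≤ f(n+1, m) + f(n, m+1). Equivalently: every finite set of points in the plane, in general position with pairwise distinct x-coordinates, of cardinality strictly greater than f(n+1,m) + f(n,m+1), contains an (n+1)-cup or an (m+1)-cap. -/

import Mathlib

/-!
Common definitions: points in the plane, general position, distinct x-coordinates,
cups, caps, convex position, and the combinatorial functions from the paper.
-/

open Finset

/-- A point in the Euclidean plane, with `p.1` its x-coordinate and `p.2` its y-coordinate. -/
abbrev Pt : Type := ℝ × ℝ

/-- A set of points is in general position if no three (distinct) of its points are collinear. -/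
def GenPos (S : Set Pt) : Prop :=
  ∀ p ∈ S, ∀ q ∈ S, ∀ r ∈ S, p ≠ q → p ≠ r → q ≠ r → ¬ Collinear ℝ ({p, q, r} : Set Pt)

/-- A set of points has pairwise distinct x-coordinates. -/
def DistinctX (S : Set Pt) : Prop :=
  ∀ p ∈ S, ∀ q ∈ S, p ≠ q → p.1 ≠ q.1

/-- The slope of the segment from `p` to `q`. -/
noncomputable def PtSlope (p q : Pt) : ℝ := (q.2 - p.2) / (q.1 - p.1)

/-- `f 0, f 1, …, f (k-1)` is a `k`-cup in `P`: the points lie in `P`, are listed in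
increasing order of x-coordinate, and the slopes of consecutive segments strictly increase. -/
def IsCupSeq (k : ℕ) (P : Set Pt) (f : ℕ → Pt) : Prop :=
  (∀ i, i < k → f i ∈ P) ∧
  (∀ i j, i < j → j < k → (f i).1 < (f j).1) ∧
  (∀ i, i + 2 < k → PtSlope (f i) (f (i + 1)) < PtSlope (f (i + 1)) (f (i + 2)))

/-- `f 0, f 1, …, f (k-1)` is a `k`-cap in `P`: the points lie in `P`, are listed in
increasing order of x-coordinate, and the slopes of consecutive segments strictly decrease. -/
def IsCapSeq (k : ℕ) (P : Set Pt) (f : ℕ → Pt) : Prop :=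
  (∀ i, i < k → f i ∈ P) ∧
  (∀ i j, i < j → j < k → (f i).1 < (f j).1) ∧
  (∀ i, i + 2 < k → PtSlope (f i) (f (i + 1)) > PtSlope (f (i + 1)) (f (i + 2)))

/-- `P` contains a `k`-cup. -/
def HasCup (k : ℕ) (P : Set Pt) : Prop := ∃ f : ℕ → Pt, IsCupSeq k P f

/-- `P` contains a `k`-cap. -/
def HasCap (k : ℕ) (P : Set Pt) : Prop := ∃ f : ℕ → Pt, IsCapSeq k P f

/-- `S` is `(n, m)`-free: it contains no `n`-cup and no `m`-cap. -/
def IsFree (n m : ℕ) (S : Set Pt) : Prop := ¬ HasCup n S ∧ ¬ HasCap m S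

/-- A set of points is in convex position: every point of the set is a vertex (extreme point)
of its convex hull, i.e. no point lies in the convex hull of the others. -/
def ConvexPos (S : Set Pt) : Prop := ∀ p ∈ S, p ∉ convexHull ℝ (S \ {p})

/-- `S` contains `n` points in convex position. -/
def HasConvexNGon (n : ℕ) (S : Set Pt) : Prop :=
  ∃ T : Finset Pt, ↑T ⊆ S ∧ T.card = n ∧ ConvexPos ↑T

/-- The set of cardinalities of finite planar point sets, in general position with pairwise
distinct x-coordinates, containing no `n`-cup and no `m`-cap.  The Erdős–Szekeres cup–cap
number `f(n, m)` is the greatest element of this set. -/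
def CupCapCards (n m : ℕ) : Set ℕ :=
  {N : ℕ | ∃ S : Finset Pt, S.card = N ∧ GenPos ↑S ∧ DistinctX ↑S ∧
    ¬ HasCup n ↑S ∧ ¬ HasCap m ↑S}

/-- The defining property of the Erdős–Szekeres number `f(n) = N`: `N` is the smallest
positive integer such that every set of `N` points in general position in the plane
contains `n` points in convex position. -/
def IsESNumber (n N : ℕ) : Prop :=
  IsLeast {N : ℕ | 0 < N ∧
    ∀ S : Finset Pt, GenPos ↑S → S.card = N → HasConvexNGon n ↑S} N

/-- The point `r` lies strictly below the (non-vertical) line through `p` and `q`. -/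
noncomputable def StrictlyBelow (p q r : Pt) : Prop :=
  r.2 < p.2 + PtSlope p q * (r.1 - p.1)

/-- The point `s ∈ S` is `(m, l)`-good: for every `n ≥ 4` and every finite set `B` of at most
`n - 2` points such that `S ∪ B` is in general position with pairwise distinct x-coordinates
and contains an `(n-1)`-cup with leftmost point `s` and rightmost point in `B`, the set
`S ∪ B` contains an `l`-cap whose two rightmost points lie in `S`, or an `m`-cup whose two
leftmost points lie in `S`, or `n` points in convex position. -/
def IsGoodPoint (m l : ℕ) (S : Finset Pt) (s : Pt) : Prop :=
  ∀ n : ℕ, 4 ≤ n → ∀ B : Finset Pt, B.card ≤ n - 2 →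
    GenPos ↑(S ∪ B) → DistinctX ↑(S ∪ B) →
    (∃ f : ℕ → Pt, IsCupSeq (n - 1) ↑(S ∪ B) f ∧ f 0 = s ∧ f (n - 2) ∈ B) →
    ((∃ f : ℕ → Pt, IsCapSeq l ↑(S ∪ B) f ∧ f (l - 2) ∈ S ∧ f (l - 1) ∈ S) ∨
     (∃ f : ℕ → Pt, IsCupSeq m ↑(S ∪ B) f ∧ f 0 ∈ S ∧ f 1 ∈ S) ∨
     HasConvexNGon n ↑(S ∪ B))

/-- The weight functions `wᵢ(m, k)` from the paper. -/
def w (i m k : ℕ) : ℕ :=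
  if i = 4 then
    Nat.choose (m + k - 6) (k - 2) + Nat.choose (m + k - 7) (k - 3) +
      2 * Nat.choose (m + k - 8) (k - 4)
  else if k < i then 0
  else (i - 1) * Nat.choose (m + k - i - 4) (k - i)

/-- `g(m, l) = Σ_{i=4}^{∞} wᵢ(m, l) = Σ_{i=4}^{l} wᵢ(m, l)` (the sum is finite since
`wᵢ(m, l) = 0` for `i > l`). -/
def g (m l : ℕ) : ℕ := ∑ i ∈ Finset.Icc 4 l, w i m l

/-!
Split a set `S` with no `(n+1)`-cup and no `(m+1)`-cap according to whether a point is the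
leftmost point of an `n`-cup. The points that are not contain no `n`-cup. The points that are
contain no `m`-cap: if an `m`-cap ends at the leftmost point `p` of an `n`-cup, general position
makes the slopes into and out of `p` differ, so either the cup extends to the left by the
second-to-last point of the cap or the cap extends to the right by the second point of the cup.
Hence `|S| ≤ f(n+1, m) + f(n, m+1)`.
-/

section CupsAndCaps

variable {k : ℕ} {P Q : Set Pt} {f : ℕ → Pt}

theorem IsCupSeq.mono (hPQ : P ⊆ Q) (hf : IsCupSeq k P f) : IsCupSeq k Q f :=
  ⟨fun i hi => hPQ (hf.1 i hi), hf.2⟩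

theorem IsCapSeq.mono (hPQ : P ⊆ Q) (hf : IsCapSeq k P f) : IsCapSeq k Q f :=
  ⟨fun i hi => hPQ (hf.1 i hi), hf.2⟩

theorem GenPos.mono (hPQ : P ⊆ Q) (h : GenPos Q) : GenPos P :=
  fun p hp q hq r hr => h p (hPQ hp) q (hPQ hq) r (hPQ hr)

theorem DistinctX.mono (hPQ : P ⊆ Q) (h : DistinctX Q) : DistinctX P :=
  fun p hp q hq => h p (hPQ hp) q (hPQ hq)

theorem collinear_of_ptSlope_eq {p q r : Pt} (hpq : p.1 < q.1) (hqr : q.1 < r.1)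
    (h : PtSlope p q = PtSlope q r) : Collinear ℝ ({p, q, r} : Set Pt) := by
  have hqp : q.1 - p.1 ≠ 0 := sub_ne_zero.mpr hpq.ne'
  have hrq : r.1 - q.1 ≠ 0 := sub_ne_zero.mpr hqr.ne'
  have cross : (q.2 - p.2) * (r.1 - q.1) = (r.2 - q.2) * (q.1 - p.1) :=
    (div_eq_div_iff hqp hrq).mp h
  rw [collinear_iff_of_mem (Set.mem_insert p {q, r})]
  refine ⟨q - p, ?_⟩
  rintro x (rfl | rfl | rfl)
  · exact ⟨0, by simp⟩
  · exact ⟨1, by simp⟩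
  · refine ⟨(x.1 - p.1) / (q.1 - p.1), Prod.ext ?_ ?_⟩
    · simp only [vadd_eq_add, Prod.fst_add, Prod.smul_fst, Prod.fst_sub, smul_eq_mul]
      field_simp
      ring
    · simp only [vadd_eq_add, Prod.snd_add, Prod.smul_snd, Prod.snd_sub, smul_eq_mul]
      field_simp
      linear_combination -cross

theorem GenPos.ptSlope_ne {p q r : Pt} (hP : GenPos P) (hp : p ∈ P) (hq : q ∈ P) (hr : r ∈ P)
    (hpq : p.1 < q.1) (hqr : q.1 < r.1) : PtSlope p q ≠ PtSlope q r := fun h =>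
  hP p hp q hq r hr (fun e => hpq.ne (congrArg Prod.fst e))
    (fun e => (hpq.trans hqr).ne (congrArg Prod.fst e)) (fun e => hqr.ne (congrArg Prod.fst e))
    (collinear_of_ptSlope_eq hpq hqr h)

theorem IsCupSeq.cons {q : Pt} (hf : IsCupSeq k P f) (hq : q ∈ P) (hx : q.1 < (f 0).1)
    (hs : PtSlope q (f 0) < PtSlope (f 0) (f 1)) :
    IsCupSeq (k + 1) P (fun | 0 => q | i + 1 => f i) := by
  obtain ⟨hmem, hx_lt, hslope⟩ := hf
  refine ⟨?_, ?_, ?_⟩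
  · rintro (_ | i) hi
    exacts [hq, hmem i (by omega)]
  · rintro (_ | i) (_ | j) hij hj
    · omega
    · rcases j.eq_zero_or_pos with rfl | hj0
      exacts [hx, hx.trans (hx_lt 0 j hj0 (by omega))]
    · omega
    · exact hx_lt i j (by omega) (by omega)
  · rintro (_ | i) hi
    exacts [hs, hslope i (by omega)]

theorem IsCapSeq.snoc {p : Pt} (hk : 2 ≤ k) (hf : IsCapSeq k P f) (hp : p ∈ P)
    (hx : (f (k - 1)).1 < p.1) (hs : PtSlope (f (k - 2)) (f (k - 1)) > PtSlope (f (k - 1)) p) :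
    IsCapSeq (k + 1) P (fun i => if i < k then f i else p) := by
  obtain ⟨hmem, hx_lt, hslope⟩ := hf
  have hx_last : ∀ i < k, (f i).1 < p.1 := fun i hi => by
    rcases (Nat.le_sub_one_of_lt hi).lt_or_eq with h | rfl
    exacts [(hx_lt i (k - 1) h (by omega)).trans hx, hx]
  refine ⟨fun i hi => ?_, fun i j hij hj => ?_, fun i hi => ?_⟩
  · dsimp only
    split_ifs
    exacts [hmem i ‹_›, hp]
  · have hik : i < k := by omega
    by_cases hjk : j < k
    · simpa [hik, hjk] using hx_lt i j hij hjk
    · simpa [hik, hjk] using hx_last i hik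
  · by_cases h : i + 2 < k
    · simpa [h, show i < k by omega, show i + 1 < k by omega] using hslope i h
    · obtain rfl : i = k - 2 := by omega
      simpa [show k - 2 < k by omega, show k - 2 + 1 = k - 1 by omega, show k - 2 + 2 = k by omega,
        show 0 < k by omega] using hs

end CupsAndCaps

section Splitting

variable {n m : ℕ} {S : Finset Pt}

open Classical in
noncomputable def cupStarts (n : ℕ) (S : Finset Pt) : Finset Pt :=
  {p ∈ S | ∃ f : ℕ → Pt, IsCupSeq n ↑S f ∧ f 0 = p}

open Classical in
theorem mem_cupStarts {p : Pt} :
    p ∈ cupStarts n S ↔ p ∈ S ∧ ∃ f : ℕ → Pt, IsCupSeq n ↑S f ∧ f 0 = p :=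
  mem_filter

theorem cupStarts_subset : cupStarts n S ⊆ S := fun _ hp => (mem_cupStarts.mp hp).1

theorem not_hasCup_sdiff_cupStarts (hn : 0 < n) : ¬ HasCup n ↑(S \ cupStarts n S) := by
  rintro ⟨f, hf⟩
  have hfS : IsCupSeq n ↑S f := hf.mono (by simp)
  have h0 : f 0 ∈ S \ cupStarts n S := hf.1 0 hn
  exact (mem_sdiff.mp h0).2 (mem_cupStarts.mpr ⟨(mem_sdiff.mp h0).1, f, hfS, rfl⟩)

theorem not_hasCap_cupStarts (hn : 2 ≤ n) (hm : 2 ≤ m) (hS : GenPos ↑S)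
    (hcup : ¬ HasCup (n + 1) ↑S) (hcap : ¬ HasCap (m + 1) ↑S) :
    ¬ HasCap m ↑(cupStarts n S) := by
  rintro ⟨f, hf⟩
  have hfS : IsCapSeq m ↑S f := hf.mono (coe_subset.mpr cupStarts_subset)
  obtain ⟨-, e, he, he0⟩ := mem_cupStarts.mp (hf.1 (m - 1) (by omega))
  have hx₁ : (f (m - 2)).1 < (f (m - 1)).1 := hfS.2.1 (m - 2) (m - 1) (by omega) (by omega)
  have hx₂ : (f (m - 1)).1 < (e 1).1 := he0 ▸ he.2.1 0 1 (by omega) (by omega)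
  have hmem₁ : f (m - 2) ∈ (↑S : Set Pt) := hfS.1 (m - 2) (by omega)
  have hmem₂ : f (m - 1) ∈ (↑S : Set Pt) := hfS.1 (m - 1) (by omega)
  have hmem₃ : e 1 ∈ (↑S : Set Pt) := he.1 1 (by omega)
  rcases (hS.ptSlope_ne hmem₁ hmem₂ hmem₃ hx₁ hx₂).lt_or_gt with h | h
  · exact hcup ⟨_, he.cons hmem₁ (he0 ▸ hx₁) (he0 ▸ h)⟩
  · exact hcap ⟨_, hfS.snoc hm hmem₃ hx₂ h⟩

theorem card_le_add_of_free {b c : ℕ} (hn : 2 ≤ n) (hm : 2 ≤ m)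
    (hb : b ∈ upperBounds (CupCapCards (n + 1) m)) (hc : c ∈ upperBounds (CupCapCards n (m + 1)))
    (hS : GenPos ↑S) (hSx : DistinctX ↑S) (hcup : ¬ HasCup (n + 1) ↑S)
    (hcap : ¬ HasCap (m + 1) ↑S) : #S ≤ b + c := by
  have hT : (↑(cupStarts n S) : Set Pt) ⊆ ↑S := coe_subset.mpr cupStarts_subset
  have hU : (↑(S \ cupStarts n S) : Set Pt) ⊆ ↑S := coe_subset.mpr sdiff_subset
  have hTb : #(cupStarts n S) ≤ b :=
    hb ⟨_, rfl, hS.mono hT, hSx.mono hT, fun ⟨f, hf⟩ => hcup ⟨f, hf.mono hT⟩,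
      not_hasCap_cupStarts hn hm hS hcup hcap⟩
  have hUc : #(S \ cupStarts n S) ≤ c :=
    hc ⟨_, rfl, hS.mono hU, hSx.mono hU, not_hasCup_sdiff_cupStarts (by omega),
      fun ⟨f, hf⟩ => hcap ⟨f, hf.mono hU⟩⟩
  rw [← card_sdiff_add_card_eq_card (cupStarts_subset (n := n))]
  omega

end Splitting

/-- For all `n, m ≥ 3`, `f(n+1, m+1) ≤ f(n+1, m) + f(n, m+1)`; equivalently,
every finite planar point set in general position with pairwise distinct x-coordinates of
cardinality strictly greater than `f(n+1, m) + f(n, m+1)` contains an `(n+1)`-cup or an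
`(m+1)`-cap. -/
theorem stmt_1 (n m : ℕ) (hn : 3 ≤ n) (hm : 3 ≤ m)
    (a b c : ℕ)
    (ha : IsGreatest (CupCapCards (n + 1) (m + 1)) a)
    (hb : IsGreatest (CupCapCards (n + 1) m) b)
    (hc : IsGreatest (CupCapCards n (m + 1)) c) :
    a ≤ b + c ∧
      ∀ S : Finset Pt, GenPos ↑S → DistinctX ↑S → b + c < S.card →
        HasCup (n + 1) ↑S ∨ HasCap (m + 1) ↑S := by
  have hfree : ∀ S : Finset Pt, GenPos ↑S → DistinctX ↑S → ¬ HasCup (n + 1) ↑S →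
      ¬ HasCap (m + 1) ↑S → #S ≤ b + c := fun S =>
    card_le_add_of_free (by omega) (by omega) hb.2 hc.2
  refine ⟨?_, fun S hS hSx hcard => ?_⟩
  · obtain ⟨S, rfl, hS, hSx, hcup, hcap⟩ := ha.1
    exact hfree S hS hSx hcup hcap
  · by_contra! h
    exact hcard.not_ge (hfree S hS hSx h.1 h.2)
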